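/- arXiv:2111.02675 — 4 statements merged into one kernel-verified Lean document; each statement's English description precedes it below -/
import Mathlib

section
/- (Bias bound on normalizing constants) The difference of partition functions satisfies 0 ≤ Z^f - Z^0 ≤ α · |{x : H(x) > c}| · (H_max - H_min) · f((H_max - c)_+), where Z^f = Σ_x e^{-H^f(x)} and Z^0 = Σ_x e^{-(H(x)-H_min)}. -/
/-!
Write `φ(u) = 1 / (α f((u - c)₊) + 1)`, so that `H^f(x) = ∫_{H_min}^{H(x)} φ` and
`H(x) - H_min = ∫_{H_min}^{H(x)} 1`. Since `0 < φ ≤ 1`, each term of `Z^f - Z^0` is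
`e^{-H^f(x)} - e^{-(H(x) - H_min)} ≥ 0`, and since `e^{-t}` is `1`-Lipschitz on `t ≥ 0` it is at most
`∫_{H_min}^{H(x)} (1 - φ)`. As `1 - 1/(t + 1) ≤ t` and `f` is monotone, `1 - φ ≤ α f((H_max - c)₊)`
on `[H_min, H_max]`, while `φ = 1` below `c`; so only the states with `H(x) > c` contribute, each
at most `α f((H_max - c)₊) (H_max - H_min)`.
-/

open MeasureTheory Real Set

lemma exp_neg_sub_exp_neg_le {a b : ℝ} (ha : 0 ≤ a) (hab : a ≤ b) :
    exp (-a) - exp (-b) ≤ b - a := by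
  have hsplit : exp (-b) = exp (-a) * exp (-(b - a)) := by rw [← exp_add]; ring_nf
  have hlin := one_sub_le_exp_neg (b - a)
  have hexp_le_one : exp (-a) ≤ 1 := exp_le_one_iff.mpr (by linarith)
  rw [hsplit]
  nlinarith [exp_pos (-a)]

lemma one_sub_one_div_add_one_le {t : ℝ} (ht : 0 ≤ t) : 1 - 1 / (t + 1) ≤ t := by
  rw [one_sub_div (by positivity), div_le_iff₀ (by positivity)]
  nlinarith

section IntervalIntegral

variable {φ : ℝ → ℝ} {a b : ℝ}

lemma integral_le_sub_of_le_one (hab : a ≤ b) (hφ : IntervalIntegrable φ volume a b)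
    (hφ_le : ∀ u ∈ Icc a b, φ u ≤ 1) : ∫ u in a..b, φ u ≤ b - a := by
  simpa using intervalIntegral.integral_mono_on hab hφ intervalIntegrable_const hφ_le

lemma exp_neg_integral_sub_exp_neg_nonneg (hab : a ≤ b) (hφ : IntervalIntegrable φ volume a b)
    (hφ_le : ∀ u ∈ Icc a b, φ u ≤ 1) :
    0 ≤ exp (-∫ u in a..b, φ u) - exp (-(b - a)) :=
  sub_nonneg.mpr (exp_le_exp.mpr (neg_le_neg (integral_le_sub_of_le_one hab hφ hφ_le)))

lemma exp_neg_integral_sub_exp_neg_le (hab : a ≤ b) (hφ : IntervalIntegrable φ volume a b)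
    (hφ_nonneg : ∀ u ∈ Icc a b, 0 ≤ φ u) (hφ_le : ∀ u ∈ Icc a b, φ u ≤ 1) {K : ℝ}
    (hK : ∀ u ∈ Icc a b, 1 - φ u ≤ K) :
    exp (-∫ u in a..b, φ u) - exp (-(b - a)) ≤ K * (b - a) := by
  have hdefect : b - a - ∫ u in a..b, φ u ≤ K * (b - a) := by
    have h := intervalIntegral.integral_mono_on hab (intervalIntegrable_const.sub hφ)
      intervalIntegrable_const hK
    rw [intervalIntegral.integral_sub intervalIntegrable_const hφ] at h
    simpa [mul_comm] using h
  calc exp (-∫ u in a..b, φ u) - exp (-(b - a)) ≤ b - a - ∫ u in a..b, φ u :=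
        exp_neg_sub_exp_neg_le (intervalIntegral.integral_nonneg hab hφ_nonneg)
          (integral_le_sub_of_le_one hab hφ hφ_le)
    _ ≤ K * (b - a) := hdefect

end IntervalIntegral

/-- The integrand of the tempered energy `H^f`. -/
noncomputable def temperedDensity (α c : ℝ) (f : ℝ → ℝ) (u : ℝ) : ℝ :=
  1 / (α * f (max (u - c) 0) + 1)

namespace temperedDensity

variable {α c : ℝ} {f : ℝ → ℝ}

lemma weight_nonneg (hα : 0 ≤ α) (hf_nonneg : ∀ u, 0 ≤ u → 0 ≤ f u) (u : ℝ) :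
    0 ≤ α * f (max (u - c) 0) :=
  mul_nonneg hα (hf_nonneg _ (le_max_right _ _))

lemma weight_mono (hα : 0 ≤ α) (hf_mono : ∀ u v, 0 ≤ u → u ≤ v → f u ≤ f v) :
    Monotone fun u => α * f (max (u - c) 0) := fun _ _ huv =>
  mul_le_mul_of_nonneg_left
    (hf_mono _ _ (le_max_right _ _) (max_le_max (sub_le_sub_right huv c) le_rfl)) hα

lemma nonneg (hα : 0 ≤ α) (hf_nonneg : ∀ u, 0 ≤ u → 0 ≤ f u) (u : ℝ) :
    0 ≤ temperedDensity α c f u := by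
  have := weight_nonneg (c := c) hα hf_nonneg u
  unfold temperedDensity
  positivity

lemma le_one (hα : 0 ≤ α) (hf_nonneg : ∀ u, 0 ≤ u → 0 ≤ f u) (u : ℝ) :
    temperedDensity α c f u ≤ 1 := by
  have := weight_nonneg (c := c) hα hf_nonneg u
  unfold temperedDensity
  rw [div_le_one (by positivity)]
  linarith

lemma antitone (hα : 0 ≤ α) (hf_nonneg : ∀ u, 0 ≤ u → 0 ≤ f u)
    (hf_mono : ∀ u v, 0 ≤ u → u ≤ v → f u ≤ f v) : Antitone (temperedDensity α c f) :=
  fun u _ huv => one_div_le_one_div_of_le (by linarith [weight_nonneg (c := c) hα hf_nonneg u])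
    (by linarith [weight_mono (c := c) hα hf_mono huv])

lemma one_sub_le (hα : 0 ≤ α) (hf_nonneg : ∀ u, 0 ≤ u → 0 ≤ f u)
    (hf_mono : ∀ u v, 0 ≤ u → u ≤ v → f u ≤ f v) {u v : ℝ} (huv : u ≤ v) :
    1 - temperedDensity α c f u ≤ α * f (max (v - c) 0) :=
  (one_sub_one_div_add_one_le (weight_nonneg hα hf_nonneg u)).trans (weight_mono hα hf_mono huv)

lemma eq_one_of_le (hf0 : f 0 = 0) {u : ℝ} (hu : u ≤ c) : temperedDensity α c f u = 1 := by
  simp [temperedDensity, max_eq_right (sub_nonpos.mpr hu), hf0]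

lemma integral_eq_sub_of_le (hf0 : f 0 = 0) {a b : ℝ} (hab : a ≤ b) (hbc : b ≤ c) :
    ∫ u in a..b, temperedDensity α c f u = b - a := by
  rw [intervalIntegral.integral_congr (g := fun _ => 1) fun u hu =>
    eq_one_of_le hf0 (((uIcc_of_le hab) ▸ hu).2.trans hbc)]
  simp

lemma exp_neg_integral_sub_nonneg (hα : 0 ≤ α) (hf_nonneg : ∀ u, 0 ≤ u → 0 ≤ f u)
    (hf_mono : ∀ u v, 0 ≤ u → u ≤ v → f u ≤ f v) {a b : ℝ} (hab : a ≤ b) :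
    0 ≤ exp (-∫ u in a..b, temperedDensity α c f u) - exp (-(b - a)) :=
  exp_neg_integral_sub_exp_neg_nonneg hab (antitone hα hf_nonneg hf_mono).intervalIntegrable
    fun u _ => le_one hα hf_nonneg u

lemma exp_neg_integral_sub_le (hα : 0 ≤ α) (hf_nonneg : ∀ u, 0 ≤ u → 0 ≤ f u)
    (hf_mono : ∀ u v, 0 ≤ u → u ≤ v → f u ≤ f v) {a b v : ℝ} (hab : a ≤ b) (hbv : b ≤ v) :
    exp (-∫ u in a..b, temperedDensity α c f u) - exp (-(b - a)) ≤
      α * f (max (v - c) 0) * (b - a) :=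
  exp_neg_integral_sub_exp_neg_le hab (antitone hα hf_nonneg hf_mono).intervalIntegrable
    (fun u _ => nonneg hα hf_nonneg u) (fun u _ => le_one hα hf_nonneg u)
    fun _ hu => one_sub_le hα hf_nonneg hf_mono (hu.2.trans hbv)

end temperedDensity

open Finset in
theorem partition_function_bias_bound_general {X : Type*} [Fintype X]
    (H : X → ℝ) (Hmin Hmax : ℝ)
    (hHmin : ∀ x, Hmin ≤ H x)
    (hHmax : ∀ x, H x ≤ Hmax)
    (f : ℝ → ℝ) (hf_nonneg : ∀ u, 0 ≤ u → 0 ≤ f u)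
    (hf_mono : ∀ u v, 0 ≤ u → u ≤ v → f u ≤ f v) (hf0 : f 0 = 0)
    (α : ℝ) (hα : 0 ≤ α) (c : ℝ)
    (Zf Z0 : ℝ)
    (hZf : Zf = ∑ x, Real.exp (-(∫ u in Hmin..(H x), 1 / (α * f (max (u - c) 0) + 1))))
    (hZ0 : Z0 = ∑ x, Real.exp (-(H x - Hmin))) :
    0 ≤ Zf - Z0 ∧
    Zf - Z0 ≤ α * ((Finset.univ.filter (fun x : X => c < H x)).card : ℝ)
      * (Hmax - Hmin) * f (max (Hmax - c) 0) := by
  set d := fun x => exp (-∫ u in Hmin..H x, temperedDensity α c f u) - exp (-(H x - Hmin))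
  set K := α * f (max (Hmax - c) 0)
  have hsum : Zf - Z0 = ∑ x, d x := by
    rw [hZf, hZ0, ← sum_sub_distrib]
    rfl
  have hd_high : ∀ x, d x ≤ K * (Hmax - Hmin) := fun x =>
    (temperedDensity.exp_neg_integral_sub_le hα hf_nonneg hf_mono (hHmin x) (hHmax x)).trans
      (mul_le_mul_of_nonneg_left (by linarith [hHmax x])
        (temperedDensity.weight_nonneg hα hf_nonneg Hmax))
  have hd_low : ∀ x, ¬c < H x → d x = 0 := fun x hx => by
    simp only [d, temperedDensity.integral_eq_sub_of_le hf0 (hHmin x) (not_lt.mp hx), sub_self]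
  refine ⟨hsum ▸ sum_nonneg fun x _ =>
    temperedDensity.exp_neg_integral_sub_nonneg hα hf_nonneg hf_mono (hHmin x), ?_⟩
  rw [hsum, ← sum_filter_add_sum_filter_not _ (fun x => c < H x),
    sum_eq_zero fun x hx => hd_low x (mem_filter.mp hx).2, add_zero]
  calc ∑ x ∈ univ.filter (fun x => c < H x), d x
      ≤ (univ.filter (fun x => c < H x)).card • (K * (Hmax - Hmin)) :=
        sum_le_card_nsmul _ _ _ fun x _ => hd_high x
    _ = _ := by rw [nsmul_eq_mul]; ring

/-- Bias bound on the normalizing constants: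
`0 ≤ Z^f - Z^0 ≤ α |{x : H(x) > c}| (H_max - H_min) f((H_max - c)_+)`. -/
theorem partition_function_bias_bound {X : Type*} [Fintype X] [Nonempty X]
    (H : X → ℝ) (Hmin Hmax : ℝ)
    (hHmin : ∀ x, Hmin ≤ H x) (hmin_attain : ∃ x, H x = Hmin)
    (hHmax : ∀ x, H x ≤ Hmax) (hmax_attain : ∃ x, H x = Hmax)
    (f : ℝ → ℝ) (hf_nonneg : ∀ u, 0 ≤ u → 0 ≤ f u)
    (hf_mono : ∀ u v, 0 ≤ u → u ≤ v → f u ≤ f v) (hf0 : f 0 = 0)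
    (α : ℝ) (hα : 0 ≤ α) (c : ℝ) (hc : Hmin ≤ c)
    (Zf Z0 : ℝ)
    (hZf : Zf = ∑ x, Real.exp (-(∫ u in Hmin..(H x), 1 / (α * f (max (u - c) 0) + 1))))
    (hZ0 : Z0 = ∑ x, Real.exp (-(H x - Hmin))) :
    0 ≤ Zf - Z0 ∧
    Zf - Z0 ≤ α * ((Finset.univ.filter (fun x : X => c < H x)).card : ℝ)
      * (Hmax - Hmin) * f (max (Hmax - c) 0) :=
  partition_function_bias_bound_general H Hmin Hmax hHmin hHmax f hf_nonneg hf_mono hf0 α hα c Zf Z0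
    hZf hZ0
end

section
/- (Small α gives small total variation bias) ‖μ^f - μ‖_TV ≤ α ξ e^{H_max - H_min} / |X|, where ξ = |{x : H(x) > c}| (H_max - H_min) f((H_max - c)_+). In particular ‖μ^f - μ‖_TV = O(α) as α → 0. -/
open MeasureTheory

/-- Small `α` gives small total variation bias:
`‖μ^f - μ‖_TV ≤ α ξ e^{H_max - H_min} / |X|` with
`ξ = |{x : H(x) > c}| (H_max - H_min) f((H_max - c)_+)`. -/
theorem tv_bias_bound {X : Type*} [Fintype X] [Nonempty X]
    (H : X → ℝ) (Hmin Hmax : ℝ)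
    (hHmin : ∀ x, Hmin ≤ H x) (hmin_attain : ∃ x, H x = Hmin)
    (hHmax : ∀ x, H x ≤ Hmax) (hmax_attain : ∃ x, H x = Hmax)
    (f : ℝ → ℝ) (hf_nonneg : ∀ u, 0 ≤ u → 0 ≤ f u)
    (hf_mono : ∀ u v, 0 ≤ u → u ≤ v → f u ≤ f v) (hf0 : f 0 = 0)
    (α : ℝ) (hα : 0 ≤ α) (c : ℝ) (hc : Hmin ≤ c)
    (Hf : X → ℝ)
    (hHf : ∀ x, Hf x = ∫ u in Hmin..(H x), 1 / (α * f (max (u - c) 0) + 1))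
    (Zf Z0 : ℝ) (hZf : Zf = ∑ x, Real.exp (-Hf x)) (hZ0 : Z0 = ∑ x, Real.exp (-(H x - Hmin)))
    (μf μ : X → ℝ) (hμf : ∀ x, μf x = Real.exp (-Hf x) / Zf)
    (hμ : ∀ x, μ x = Real.exp (-(H x - Hmin)) / Z0)
    (ξ : ℝ)
    (hξ : ξ = ((Finset.univ.filter (fun x : X => c < H x)).card : ℝ)
      * (Hmax - Hmin) * f (max (Hmax - c) 0)) :
    (1 / 2) * ∑ x, |μf x - μ x|
      ≤ α * ξ * Real.exp (Hmax - Hmin) / (Fintype.card X : ℝ) := by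
  obtain ⟨x1, hx1⟩ := hmax_attain
  have hΔ : 0 ≤ Hmax - Hmin := by have := hHmin x1; linarith [hx1 ▸ this]
  set F := f (max (Hmax - c) 0) with hFdef
  have hF0 : 0 ≤ F := hf_nonneg _ (le_max_right _ _)
  set g : ℝ → ℝ := fun u => 1 / (α * f (max (u - c) 0) + 1) with hg
  have hden : ∀ u, 1 ≤ α * f (max (u - c) 0) + 1 := fun u => by
    have := hf_nonneg (max (u - c) 0) (le_max_right _ _)
    nlinarith
  have hganti : Antitone g := by
    intro u v huv
    have h1 : α * f (max (u - c) 0) ≤ α * f (max (v - c) 0) := by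
      apply mul_le_mul_of_nonneg_left _ hα
      exact hf_mono _ _ (le_max_right _ _) (max_le_max (by linarith) le_rfl)
    exact one_div_le_one_div_of_le (by linarith [hden u]) (by linarith)
  have hgint : ∀ x, IntervalIntegrable g MeasureTheory.volume Hmin (H x) :=
    fun x => hganti.intervalIntegrable
  have hgle1 : ∀ u, g u ≤ 1 := fun u => by
    rw [hg]
    simp only
    rw [div_le_one (by linarith [hden u])]
    linarith [hden u]
  have hg0 : ∀ u, 0 ≤ g u := fun u =>
    div_nonneg zero_le_one (by linarith [hden u])
  have hfle : ∀ x, Hf x ≤ H x - Hmin := by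
    intro x
    rw [hHf x]
    calc (∫ u in Hmin..(H x), g u) ≤ ∫ _u in Hmin..(H x), (1:ℝ) := by
          apply intervalIntegral.integral_mono_on (hHmin x) (hgint x) intervalIntegrable_const
          intro u _; exact hgle1 u
      _ = H x - Hmin := by simp
  have hf0' : ∀ x, 0 ≤ Hf x := by
    intro x
    rw [hHf x]
    exact intervalIntegral.integral_nonneg (hHmin x) (fun u _ => hg0 u)
  have hdiff : ∀ x, (H x - Hmin) - Hf x ≤ if c < H x then α * F * (Hmax - Hmin) else 0 := by
    intro x
    by_cases hxc : c < H x
    · simp only [if_pos hxc]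
      rw [hHf x]
      have h1 : (H x - Hmin) - (∫ u in Hmin..(H x), g u) = ∫ u in Hmin..(H x), (1 - g u) := by
        rw [intervalIntegral.integral_sub intervalIntegrable_const (hgint x)]
        simp
      rw [h1]
      calc (∫ u in Hmin..(H x), (1 - g u))
          ≤ ∫ _u in Hmin..(H x), α * F := by
            apply intervalIntegral.integral_mono_on (hHmin x)
              (intervalIntegrable_const.sub (hgint x)) intervalIntegrable_const
            intro u hu
            have hd := hden u
            set d := α * f (max (u - c) 0) + 1 with hdd
            have hd0 : (0:ℝ) < d := by linarith
            have hinv : d * (1/d) = 1 := by field_simp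
            have h2 : 1 - g u ≤ d - 1 := by
              have : g u = 1 / d := rfl
              rw [this]
              nlinarith
            have h3 : d - 1 ≤ α * F := by
              rw [hdd]
              have : f (max (u - c) 0) ≤ F := by
                apply hf_mono _ _ (le_max_right _ _)
                apply max_le_max _ le_rfl
                have := hHmax x
                have := hu.2
                linarith
              nlinarith
            linarith
      _ = (H x - Hmin) * (α * F) := by simp [smul_eq_mul]; ring
      _ ≤ α * F * (Hmax - Hmin) := by
            have := hHmax x
            have hαF : 0 ≤ α * F := mul_nonneg hα hF0
            nlinarith
    · simp only [if_neg hxc]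
      push_neg at hxc
      have heq : Hf x = H x - Hmin := by
        rw [hHf x]
        have hEq : Set.EqOn g (fun _ => (1:ℝ)) (Set.uIcc Hmin (H x)) := by
          intro u hu
          rw [Set.uIcc_of_le (hHmin x)] at hu
          have hm : max (u - c) 0 = 0 := max_eq_right (by linarith [hu.2])
          show 1 / (α * f (max (u - c) 0) + 1) = 1
          rw [hm, hf0, mul_zero, zero_add, div_one]
        rw [intervalIntegral.integral_congr hEq]
        simp
      linarith [heq]
  have hexp : ∀ x, Real.exp (-Hf x) - Real.exp (-(H x - Hmin)) ≤ (H x - Hmin) - Hf x := by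
    intro x
    have hs := hf0' x
    have ht := hfle x
    have h1 : Real.exp (-Hf x) ≤ 1 := Real.exp_le_one_iff.2 (by linarith)
    have h2 : Real.exp (-(H x - Hmin)) = Real.exp (-Hf x) * Real.exp (-((H x - Hmin) - Hf x)) := by
      rw [← Real.exp_add]; ring_nf
    have h3 : 1 - ((H x - Hmin) - Hf x) ≤ Real.exp (-((H x - Hmin) - Hf x)) := by
      have := Real.add_one_le_exp (-((H x - Hmin) - Hf x)); linarith
    nlinarith [Real.exp_pos (-Hf x)]
  have hZdiff : Zf - Z0 ≤ α * ξ := by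
    rw [hZf, hZ0, ← Finset.sum_sub_distrib]
    calc (∑ x, (Real.exp (-Hf x) - Real.exp (-(H x - Hmin))))
        ≤ ∑ x, (if c < H x then α * F * (Hmax - Hmin) else 0) :=
          Finset.sum_le_sum (fun x _ => le_trans (hexp x) (hdiff x))
      _ = ((Finset.univ.filter (fun x : X => c < H x)).card : ℝ) * (α * F * (Hmax - Hmin)) := by
          rw [← Finset.sum_filter, Finset.sum_const, nsmul_eq_mul]
      _ = α * ξ := by rw [hξ]; ring
  have hZ0pos : 0 < Z0 := by
    rw [hZ0]; exact Finset.sum_pos (fun x _ => Real.exp_pos _) Finset.univ_nonempty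
  have hZle : Z0 ≤ Zf := by
    rw [hZ0, hZf]
    exact Finset.sum_le_sum (fun x _ => Real.exp_le_exp.2 (by linarith [hfle x]))
  have hZfpos : 0 < Zf := lt_of_lt_of_le hZ0pos hZle
  have hn : (0:ℝ) < (Fintype.card X : ℝ) := by
    exact_mod_cast Fintype.card_pos
  have hZflb : (Fintype.card X : ℝ) * Real.exp (-(Hmax - Hmin)) ≤ Zf := by
    rw [hZf]
    calc (Fintype.card X : ℝ) * Real.exp (-(Hmax - Hmin))
        = ∑ _x : X, Real.exp (-(Hmax - Hmin)) := by
          rw [Finset.sum_const, nsmul_eq_mul, Finset.card_univ]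
      _ ≤ ∑ x, Real.exp (-Hf x) :=
          Finset.sum_le_sum (fun x _ => Real.exp_le_exp.2
            (by have := hfle x; have := hHmax x; linarith))
  have hpt : ∀ x, |μf x - μ x| ≤
      (Real.exp (-Hf x) - Real.exp (-(H x - Hmin))) / Zf
      + Real.exp (-(H x - Hmin)) * (Zf - Z0) / (Zf * Z0) := by
    intro x
    rw [hμf x, hμ x]
    have hid : Real.exp (-Hf x) / Zf - Real.exp (-(H x - Hmin)) / Z0
        = (Real.exp (-Hf x) - Real.exp (-(H x - Hmin))) / Zf
          - Real.exp (-(H x - Hmin)) * (Zf - Z0) / (Zf * Z0) := by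
      field_simp
      ring
    rw [hid]
    have hab : Real.exp (-(H x - Hmin)) ≤ Real.exp (-Hf x) :=
      Real.exp_le_exp.2 (by linarith [hfle x])
    have h1 : 0 ≤ (Real.exp (-Hf x) - Real.exp (-(H x - Hmin))) / Zf :=
      div_nonneg (by linarith) hZfpos.le
    have h2 : 0 ≤ Real.exp (-(H x - Hmin)) * (Zf - Z0) / (Zf * Z0) :=
      div_nonneg (mul_nonneg (Real.exp_pos _).le (by linarith)) (by positivity)
    exact abs_le.mpr ⟨by linarith, by linarith⟩
  have hsum : (∑ x, |μf x - μ x|) ≤ 2 * ((Zf - Z0) / Zf) := by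
    calc (∑ x, |μf x - μ x|)
        ≤ ∑ x, ((Real.exp (-Hf x) - Real.exp (-(H x - Hmin))) / Zf
            + Real.exp (-(H x - Hmin)) * (Zf - Z0) / (Zf * Z0)) :=
          Finset.sum_le_sum (fun x _ => hpt x)
      _ = (Zf - Z0) / Zf + Z0 * (Zf - Z0) / (Zf * Z0) := by
          rw [Finset.sum_add_distrib]
          congr 1
          · rw [← Finset.sum_div, Finset.sum_sub_distrib, ← hZf, ← hZ0]
          · rw [← Finset.sum_div, ← Finset.sum_mul, ← hZ0]
      _ = 2 * ((Zf - Z0) / Zf) := by field_simp; ring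
  have hξ0 : 0 ≤ ξ := by
    rw [hξ]
    exact mul_nonneg (mul_nonneg (Nat.cast_nonneg _) hΔ) hF0
  have hfinal : (Zf - Z0) / Zf ≤ α * ξ * Real.exp (Hmax - Hmin) / (Fintype.card X : ℝ) := by
    have h1 : (Zf - Z0) / Zf ≤ (α * ξ) / ((Fintype.card X : ℝ) * Real.exp (-(Hmax - Hmin))) :=
      div_le_div₀ (mul_nonneg hα hξ0) hZdiff (by positivity) hZflb
    calc (Zf - Z0) / Zf ≤ (α * ξ) / ((Fintype.card X : ℝ) * Real.exp (-(Hmax - Hmin))) := h1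
      _ = α * ξ * Real.exp (Hmax - Hmin) / (Fintype.card X : ℝ) := by
          rw [Real.exp_neg]
          field_simp
  linarith [hsum, hfinal]
end

section
/- (Time-derivative bound for the instantaneous stationary distribution) If α : [0,∞) → ℝ≥0 is differentiable and H^f_t(x) = ∫_{H_min}^{H(x)} 1/(α_t f((u-c)_+)+1) du, then |d/dt μ^f_t(x)| ≤ (-α'_t) f(H_max - c) (H_max - H_min) · μ^f_t(x) whenever α'_t ≤ 0, where μ^f_t(x) = e^{-H^f_t(x)}/Z^f_t. -/
/-!
Write `k u = f ((u - c)₊)` and `μ^f_t = gibbs (H^f_t)`. For any energy `E_s` the Gibbs weights satisfy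
`d/ds gibbs (E_s) x = μ_x (∑ y, μ_y E'_y - E'_x)`. Differentiating under the integral sign,
`E'_y = -α'_t ∫_{H_min}^{H(y)} k / (α_t k + 1)²`, and since `0 ≤ k ≤ f (H_max - c)` below `H_max`
every `E'_y` lies in `[0, -α'_t f (H_max - c) (H_max - H_min)]`. The mean `∑ y, μ_y E'_y` lies in the
same interval, so it differs from `E'_x` by at most the interval's length.
-/

open MeasureTheory Set Real

section Gibbs

variable {X : Type*} [Fintype X]

noncomputable def gibbs (E : X → ℝ) (x : X) : ℝ :=
  exp (-E x) / ∑ y, exp (-E y)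

lemma sum_exp_neg_pos (E : X → ℝ) (x : X) : 0 < ∑ y, exp (-E y) :=
  Finset.sum_pos (fun _ _ => exp_pos _) ⟨x, Finset.mem_univ x⟩

lemma gibbs_nonneg (E : X → ℝ) (x : X) : 0 ≤ gibbs E x :=
  div_nonneg (exp_pos _).le (Finset.sum_nonneg fun _ _ => (exp_pos _).le)

lemma sum_gibbs [Nonempty X] (E : X → ℝ) : ∑ x, gibbs E x = 1 := by
  simp only [gibbs, ← Finset.sum_div]
  exact div_self (sum_exp_neg_pos E (Classical.arbitrary X)).ne'

lemma weighted_sum_mem_Icc {w g : X → ℝ} {a b : ℝ} (hw : ∀ y, 0 ≤ w y) (hw1 : ∑ y, w y = 1)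
    (hg : ∀ y, g y ∈ Icc a b) : ∑ y, w y * g y ∈ Icc a b := by
  constructor
  · calc a = ∑ y, w y * a := by rw [← Finset.sum_mul, hw1, one_mul]
      _ ≤ ∑ y, w y * g y :=
        Finset.sum_le_sum fun y _ => mul_le_mul_of_nonneg_left (hg y).1 (hw y)
  · calc ∑ y, w y * g y ≤ ∑ y, w y * b :=
        Finset.sum_le_sum fun y _ => mul_le_mul_of_nonneg_left (hg y).2 (hw y)
      _ = b := by rw [← Finset.sum_mul, hw1, one_mul]

lemma hasDerivAt_gibbs {E : ℝ → X → ℝ} {E' : X → ℝ} {t : ℝ}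
    (hE : ∀ y, HasDerivAt (fun s => E s y) (E' y) t) (x : X) :
    HasDerivAt (fun s => gibbs (E s) x)
      (gibbs (E t) x * (∑ y, gibbs (E t) y * E' y - E' x)) t := by
  have hexp : ∀ y, HasDerivAt (fun s => exp (-E s y)) (exp (-E t y) * -E' y) t :=
    fun y => (hE y).neg.exp
  have hZ := (sum_exp_neg_pos (E t) x).ne'
  refine ((hexp x).fun_div (HasDerivAt.fun_sum fun y _ => hexp y) hZ).congr_deriv ?_
  have hmean : ∑ y, gibbs (E t) y * E' y = (∑ y, exp (-E t y) * E' y) / ∑ y, exp (-E t y) := by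
    simp only [gibbs, Finset.sum_div, div_mul_eq_mul_div]
  rw [hmean]
  simp only [gibbs, mul_neg, Finset.sum_neg_distrib]
  field_simp
  ring

theorem abs_deriv_gibbs_le {E : ℝ → X → ℝ} {E' : X → ℝ} {t a b : ℝ}
    (hE : ∀ y, HasDerivAt (fun s => E s y) (E' y) t) (hE' : ∀ y, E' y ∈ Icc a b) (x : X) :
    |deriv (fun s => gibbs (E s) x) t| ≤ (b - a) * gibbs (E t) x := by
  have : Nonempty X := ⟨x⟩
  have hmean := weighted_sum_mem_Icc (gibbs_nonneg (E t)) (sum_gibbs (E t)) hE'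
  rw [(hasDerivAt_gibbs hE x).deriv, abs_mul, abs_of_nonneg (gibbs_nonneg _ _), mul_comm]
  exact mul_le_mul_of_nonneg_right (Real.dist_le_of_mem_Icc hmean (hE' x)) (gibbs_nonneg _ _)

end Gibbs

section PenalizedIntegral

variable {k : ℝ → ℝ}

theorem hasDerivAt_integral_one_div_mul_add_one (hk : Continuous k) (hk0 : ∀ u, 0 ≤ k u)
    (a b : ℝ) {α₀ : ℝ} (hα₀ : 0 ≤ α₀) :
    HasDerivAt (fun α => ∫ u in a..b, 1 / (α * k u + 1))
      (-∫ u in a..b, k u / (α₀ * k u + 1) ^ 2) α₀ := by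
  obtain ⟨K, hK⟩ := (isCompact_uIcc (a := a) (b := b)).exists_bound_of_continuousOn hk.continuousOn
  have hK0 : 0 ≤ K := (norm_nonneg _).trans (hK a left_mem_uIcc)
  set ε : ℝ := (2 * (K + 1))⁻¹ with hε_def
  have hε : ε * (K + 1) = 1 / 2 := by rw [hε_def]; field_simp
  have hε0 : 0 < ε := by rw [hε_def]; positivity
  have hkK : ∀ u ∈ uIoc a b, k u ≤ K := fun u hu =>
    (le_norm_self _).trans (hK u (uIoc_subset_uIcc hu))
  have hden : ∀ u ∈ uIoc a b, ∀ α ∈ Ioi (-ε), 1 / 2 ≤ α * k u + 1 := by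
    intro u hu α hα
    have hku := hkK u hu
    nlinarith [mul_nonneg (le_of_lt (neg_lt_iff_pos_add.mp hα)) (hk0 u), hk0 u]
  have hk_meas := hk.measurable
  have hF_cont : Continuous fun u => 1 / (α₀ * k u + 1) :=
    continuous_const.div (by fun_prop) fun u => by nlinarith [mul_nonneg hα₀ (hk0 u)]
  have key := intervalIntegral.hasDerivAt_integral_of_dominated_loc_of_deriv_le
    (F := fun α u => 1 / (α * k u + 1)) (F' := fun α u => -k u / (α * k u + 1) ^ 2)
    (bound := fun _ => 4 * K) (μ := volume) (a := a) (b := b)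
    (Ioi_mem_nhds (by linarith : -ε < α₀))
    (.of_forall fun α => (by fun_prop : Measurable _).aestronglyMeasurable)
    (hF_cont.intervalIntegrable _ _) (by fun_prop : Measurable _).aestronglyMeasurable
    (.of_forall fun u hu α hα => ?_) intervalIntegrable_const
    (.of_forall fun u hu α hα => ?_)
  · simpa only [neg_div, intervalIntegral.integral_neg] using key.2
  · have hd := hden u hu α hα
    have hku := hkK u hu
    rw [norm_div, norm_neg, norm_pow, Real.norm_of_nonneg (hk0 u),
      Real.norm_of_nonneg (by positivity), div_le_iff₀ (by nlinarith)]
    have hd2 : 1 / 4 ≤ (α * k u + 1) ^ 2 := by nlinarith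
    nlinarith [mul_le_mul_of_nonneg_left hd2 hK0]
  · have hne : α * k u + 1 ≠ 0 := by linarith [hden u hu α hα]
    simpa [one_div, Pi.inv_def] using (((hasDerivAt_id α).mul_const (k u)).add_const 1).inv hne

theorem integral_div_mul_add_one_sq_mem_Icc (hk : Continuous k) (hk0 : ∀ u, 0 ≤ k u)
    {a b K α : ℝ} (hab : a ≤ b) (hkK : ∀ u ∈ Icc a b, k u ≤ K) (hα : 0 ≤ α) :
    ∫ u in a..b, k u / (α * k u + 1) ^ 2 ∈ Icc 0 (K * (b - a)) := by
  have hden : ∀ u, 1 ≤ α * k u + 1 := fun u => le_add_of_nonneg_left (mul_nonneg hα (hk0 u))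
  refine ⟨intervalIntegral.integral_nonneg hab fun u _ => div_nonneg (hk0 u) (sq_nonneg _), ?_⟩
  have hcont : Continuous fun u => k u / (α * k u + 1) ^ 2 :=
    hk.div (by fun_prop) fun u => pow_ne_zero 2 (by linarith [hden u])
  calc ∫ u in a..b, k u / (α * k u + 1) ^ 2 ≤ ∫ _ in a..b, K :=
        intervalIntegral.integral_mono_on hab (hcont.intervalIntegrable _ _)
          intervalIntegrable_const fun u hu =>
            (div_le_self (hk0 u) (one_le_pow₀ (hden u))).trans (hkK u hu)
    _ = K * (b - a) := by rw [intervalIntegral.integral_const, smul_eq_mul, mul_comm]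

end PenalizedIntegral

theorem instantaneous_stationary_derivative_bound_general {X : Type*} [Fintype X]
    (H : X → ℝ) (Hmin Hmax : ℝ)
    (hHmin : ∀ x, Hmin ≤ H x)
    (hHmax : ∀ x, H x ≤ Hmax)
    (f : ℝ → ℝ) (hf_diff : Differentiable ℝ f)
    (hf_nonneg : ∀ u, 0 ≤ u → 0 ≤ f u)
    (hf_mono : ∀ u v, 0 ≤ u → u ≤ v → f u ≤ f v)
    (c : ℝ) (hc' : c ≤ Hmax)
    (α : ℝ → ℝ) (hα_diff : Differentiable ℝ α) (hα_nonneg : ∀ t, 0 ≤ α t)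
    (Hft : ℝ → X → ℝ)
    (hHft : ∀ t x, Hft t x = ∫ u in Hmin..(H x), 1 / (α t * f (max (u - c) 0) + 1))
    (Z : ℝ → ℝ) (hZ : ∀ t, Z t = ∑ x, Real.exp (-Hft t x))
    (μft : ℝ → X → ℝ) (hμft : ∀ t x, μft t x = Real.exp (-Hft t x) / Z t)
    (t : ℝ) (hα' : deriv α t ≤ 0) (x : X) :
    |deriv (fun s => μft s x) t|
      ≤ (-(deriv α t)) * f (Hmax - c) * (Hmax - Hmin) * μft t x := by
  set k : ℝ → ℝ := fun u => f (max (u - c) 0)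
  have hk : Continuous k := hf_diff.continuous.comp (by fun_prop)
  have hk0 : ∀ u, 0 ≤ k u := fun u => hf_nonneg _ (le_max_right _ _)
  have hkK : ∀ y, ∀ u ∈ Icc Hmin (H y), k u ≤ f (Hmax - c) := fun y u hu =>
    hf_mono _ _ (le_max_right _ _) (max_le (by linarith [hu.2, hHmax y]) (by linarith))
  set J : X → ℝ := fun y => ∫ u in Hmin..H y, k u / (α t * k u + 1) ^ 2
  have hHft_deriv : ∀ y, HasDerivAt (fun s => Hft s y) (-deriv α t * J y) t := fun y => by
    simp_rw [hHft]
    exact ((hasDerivAt_integral_one_div_mul_add_one hk hk0 _ _ (hα_nonneg t)).comp t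
      (hα_diff t).hasDerivAt).congr_deriv (by ring)
  have hJ : ∀ y, -deriv α t * J y ∈ Icc 0 (-deriv α t * (f (Hmax - c) * (Hmax - Hmin))) := by
    intro y
    obtain ⟨hJ0, hJK⟩ :=
      integral_div_mul_add_one_sq_mem_Icc hk hk0 (hHmin y) (hkK y) (hα_nonneg t)
    have hK0 : 0 ≤ f (Hmax - c) := hf_nonneg _ (by linarith)
    refine ⟨mul_nonneg (by linarith) hJ0, mul_le_mul_of_nonneg_left ?_ (by linarith)⟩
    exact hJK.trans (mul_le_mul_of_nonneg_left (by linarith [hHmax y]) hK0)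
  have hμ : ∀ s, μft s x = gibbs (Hft s) x := fun s => by rw [hμft, hZ]; rfl
  simp_rw [hμ]
  simpa only [sub_zero, mul_assoc] using abs_deriv_gibbs_le hHft_deriv hJ x

/-- Time-derivative bound for the instantaneous stationary distribution: if the penalty
`α_t` is differentiable with `α'_t ≤ 0`, then
`|d/dt μ^f_t(x)| ≤ (-α'_t) f(H_max - c) (H_max - H_min) μ^f_t(x)`. -/
theorem instantaneous_stationary_derivative_bound {X : Type*} [Fintype X] [Nonempty X]
    (H : X → ℝ) (Hmin Hmax : ℝ)
    (hHmin : ∀ x, Hmin ≤ H x) (hmin_attain : ∃ x, H x = Hmin)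
    (hHmax : ∀ x, H x ≤ Hmax) (hmax_attain : ∃ x, H x = Hmax)
    (f : ℝ → ℝ) (hf_diff : Differentiable ℝ f)
    (hf_nonneg : ∀ u, 0 ≤ u → 0 ≤ f u)
    (hf_mono : ∀ u v, 0 ≤ u → u ≤ v → f u ≤ f v) (hf0 : f 0 = 0)
    (c : ℝ) (hc : Hmin ≤ c) (hc' : c ≤ Hmax)
    (α : ℝ → ℝ) (hα_diff : Differentiable ℝ α) (hα_nonneg : ∀ t, 0 ≤ α t)
    (Hft : ℝ → X → ℝ)
    (hHft : ∀ t x, Hft t x = ∫ u in Hmin..(H x), 1 / (α t * f (max (u - c) 0) + 1))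
    (Z : ℝ → ℝ) (hZ : ∀ t, Z t = ∑ x, Real.exp (-Hft t x))
    (μft : ℝ → X → ℝ) (hμft : ∀ t x, μft t x = Real.exp (-Hft t x) / Z t)
    (t : ℝ) (ht : 0 ≤ t) (hα' : deriv α t ≤ 0) (x : X) :
    |deriv (fun s => μft s x) t|
      ≤ (-(deriv α t)) * f (Hmax - c) * (Hmax - Hmin) * μft t x :=
  instantaneous_stationary_derivative_bound_general H Hmin Hmax hHmin hHmax f hf_diff hf_nonneg
    hf_mono c hc' α hα_diff hα_nonneg Hft hHft Z hZ μft hμft t hα' x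
end

section
/- (Derivative of the f(x)=x² modified Hamiltonian in β = 1/α) For H(y) > c and β > 0, d/dβ [ (1/√(1/β)) · ... ] gives -d/dβ H^f_β(y) = (H(y)-c)/(2(H(y)-c)² + 2β) - arctan(√(1/β)(H(y)-c))/(2√β), and this quantity satisfies the bounds -π/(4√β) ≤ -d/dβ H^f_β(y) ≤ (H_max - H_min)/(2β). -/
open Real

/- With `a = H(y) - c > 0`, the β-derivative of `√β · arctan (a/√β)` is
`arctan (a/√β)/(2√β) - a/(2(β + a²))`. Both terms are nonnegative, so the negated derivative is
squeezed between `-arctan (a/√β)/(2√β) ≥ -π/(4√β)` and `a/(2(β + a²)) ≤ a/(2β)`, and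
`a ≤ H_max - H_min` because `H(y) ≤ H_max` and `H_min ≤ c`. -/

theorem hasDerivAt_sqrt_mul_arctan_div_sqrt (a : ℝ) {β : ℝ} (hβ : 0 < β) :
    HasDerivAt (fun b : ℝ => √b * arctan (a / √b))
      (arctan (a / √β) / (2 * √β) - a / (2 * (β + a ^ 2))) β := by
  have hsqrt_pos : 0 < √β := sqrt_pos.mpr hβ
  have hsqrt_sq : √β ^ 2 = β := sq_sqrt hβ.le
  have hsqrt : HasDerivAt sqrt (1 / (2 * √β)) β := hasDerivAt_sqrt hβ.ne'
  have hquot : HasDerivAt (fun b : ℝ => a / √b) ((0 * √β - a * (1 / (2 * √β))) / √β ^ 2) β :=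
    (hasDerivAt_const β a).div hsqrt hsqrt_pos.ne'
  refine (hsqrt.mul hquot.arctan).congr_deriv ?_
  have hβa : 0 < β + a ^ 2 := by positivity
  have hdenom : 1 + (a / √β) ^ 2 = (β + a ^ 2) / β := by
    field_simp
    rw [hsqrt_sq]
    ring
  rw [hdenom, hsqrt_sq]
  field_simp
  ring_nf

theorem neg_pi_div_four_sqrt_le {a β : ℝ} (ha : 0 ≤ a) (hβ : 0 ≤ β) :
    -(π / (4 * √β)) ≤ a / (2 * (β + a ^ 2)) - arctan (a / √β) / (2 * √β) := by
  have harctan : arctan (a / √β) / (2 * √β) ≤ π / 2 / (2 * √β) := by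
    gcongr
    exact (arctan_lt_pi_div_two _).le
  have hquot : 0 ≤ a / (2 * (β + a ^ 2)) := by positivity
  have hpi : π / 2 / (2 * √β) = π / (4 * √β) := by ring
  linarith

theorem sub_arctan_div_sqrt_le {a β : ℝ} (ha : 0 ≤ a) (hβ : 0 < β) :
    a / (2 * (β + a ^ 2)) - arctan (a / √β) / (2 * √β) ≤ a / (2 * β) := by
  have harctan : 0 ≤ arctan (a / √β) / (2 * √β) := by
    have : 0 ≤ arctan (a / √β) := arctan_nonneg.mpr (by positivity)
    positivity
  have hquot : a / (2 * (β + a ^ 2)) ≤ a / (2 * β) := by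
    gcongr
    nlinarith
  linarith

/-- Derivative in `β = 1/α` of the quadratic (`f(x)=x²`) modified Hamiltonian
`H^f_β(y) = c - H_min + √β arctan((H(y)-c)/√β)` for `H(y) > c`, together with the bounds
`-π/(4√β) ≤ -d/dβ H^f_β(y) ≤ (H_max - H_min)/(2β)`. -/
theorem quadratic_modified_hamiltonian_beta_derivative
    (Hy Hmax Hmin c : ℝ) (hc : Hmin ≤ c) (hy : c < Hy) (hmax : Hy ≤ Hmax)
    (β : ℝ) (hβ : 0 < β) :
    -(deriv (fun b : ℝ => c - Hmin + Real.sqrt b * Real.arctan ((Hy - c) / Real.sqrt b)) β)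
      = (Hy - c) / (2 * (Hy - c) ^ 2 + 2 * β)
        - Real.arctan (Real.sqrt (1 / β) * (Hy - c)) / (2 * Real.sqrt β) ∧
    -(Real.pi / (4 * Real.sqrt β))
      ≤ -(deriv (fun b : ℝ => c - Hmin + Real.sqrt b * Real.arctan ((Hy - c) / Real.sqrt b)) β) ∧
    -(deriv (fun b : ℝ => c - Hmin + Real.sqrt b * Real.arctan ((Hy - c) / Real.sqrt b)) β)
      ≤ (Hmax - Hmin) / (2 * β) := by
  have ha : 0 ≤ Hy - c := (sub_pos.mpr hy).le
  have hderiv :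
      -(deriv (fun b : ℝ => c - Hmin + √b * arctan ((Hy - c) / √b)) β)
        = (Hy - c) / (2 * (β + (Hy - c) ^ 2)) - arctan ((Hy - c) / √β) / (2 * √β) := by
    rw [((hasDerivAt_sqrt_mul_arctan_div_sqrt (Hy - c) hβ).const_add (c - Hmin)).deriv]
    ring
  have hsqrt_inv : √(1 / β) * (Hy - c) = (Hy - c) / √β := by
    rw [one_div, sqrt_inv, inv_mul_eq_div]
  rw [hderiv, hsqrt_inv]
  refine ⟨by ring, neg_pi_div_four_sqrt_le ha hβ.le, ?_⟩
  calc _ ≤ (Hy - c) / (2 * β) := sub_arctan_div_sqrt_le ha hβ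
    _ ≤ (Hmax - Hmin) / (2 * β) := by gcongr
end
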